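/- For the massive Thirring soliton U_ω with ω ∈ (−1,1), the squared L² norm of its derivative satisfies ∫_ℝ |U_ω'(x)|² dx = −4ω√(1−ω²) + 4(1+ω²) arctan(√((1−ω)/(1+ω))). -/

import Mathlib

/-!
With `μ = √(1 - ω²)`, `S = sinh (μ x)`, `C = cosh (μ x)` and `cosh (2 μ x) = 1 + 2 S²`,
the density `|U_ω'|²` is the even function
`2 (1 - ω²)² ((1 + ω) S² (ω - 3 - 2 S²)² + (1 - ω) C² (ω + 1 - 2 S²)²) / (1 + ω + 2 S²)⁴`.
It is the derivative of
`F x = 2 (1 + ω²) arctan (k tanh (μ x)) - 2 ω μ sinh (2 μ x) / (ω + cosh (2 μ x))`,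
`k = √((1 - ω) / (1 + ω))`, which vanishes at `0` and tends to `2 (1 + ω²) arctan k - 2 ω μ`
at `+∞`; by evenness the integral over `ℝ` is twice that limit.
-/

open MeasureTheory

/-- The massive Thirring line soliton profile. -/
noncomputable def thirringSoliton (ω x : ℝ) : ℂ :=
  (↑(Real.sqrt 2 * Real.sqrt (1 - ω ^ 2)) : ℂ) *
    ((↑(Real.sqrt (1 + ω) * Real.cosh (Real.sqrt (1 - ω ^ 2) * x)) : ℂ)
      - Complex.I * (↑(Real.sqrt (1 - ω) * Real.sinh (Real.sqrt (1 - ω ^ 2) * x)) : ℂ)) /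
    (↑(ω + Real.cosh (2 * Real.sqrt (1 - ω ^ 2) * x)) : ℂ)

open Real Filter Topology Set

theorem integral_of_even_of_hasDerivAt_of_nonneg {f F : ℝ → ℝ} {l : ℝ}
    (heven : ∀ x, f (-x) = f x) (hderiv : ∀ x ∈ Ici (0 : ℝ), HasDerivAt F (f x) x)
    (hf : ∀ x ∈ Ioi (0 : ℝ), 0 ≤ f x) (hF : Tendsto F atTop (𝓝 l)) :
    ∫ x, f x = 2 * (l - F 0) := by
  have hf_abs : (fun x => f |x|) = f := by
    ext x
    rcases abs_choice x with h | h <;> rw [h]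
    exact heven x
  rw [← hf_abs, integral_comp_abs, integral_Ioi_of_hasDerivAt_of_nonneg' hderiv hf hF]

theorem tendsto_sinh_div_const_add_cosh_atTop (c : ℝ) :
    Tendsto (fun y => sinh y / (c + cosh y)) atTop (𝓝 1) := by
  have hrat : (fun y => sinh y / (c + cosh y)) =
      fun y => (1 - exp (-y) ^ 2) / (1 + 2 * c * exp (-y) + exp (-y) ^ 2) := by
    ext y
    rw [← mul_div_mul_right _ _ (mul_ne_zero two_ne_zero (exp_pos (-y)).ne'), sinh_eq, cosh_eq]
    have hexp : exp y * exp (-y) = 1 := by rw [← exp_add, add_neg_cancel, exp_zero]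
    congr 1 <;> linear_combination hexp
  rw [hrat]
  have h := tendsto_exp_neg_atTop_nhds_zero
  have hden : Tendsto (fun y => 1 + 2 * c * exp (-y) + exp (-y) ^ 2) atTop (𝓝 1) := by
    simpa using (tendsto_const_nhds.add (h.const_mul (2 * c))).add (h.pow 2)
  convert ((tendsto_const_nhds (x := (1 : ℝ))).sub (h.pow 2)).div hden one_ne_zero using 2 <;>
    norm_num

theorem tendsto_tanh_atTop : Tendsto tanh atTop (𝓝 1) := by
  simpa [← tanh_eq_sinh_div_cosh] using tendsto_sinh_div_const_add_cosh_atTop 0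

theorem hasDerivAt_arctan_const_mul_tanh (k t : ℝ) :
    HasDerivAt (fun t => arctan (k * tanh t)) (k / (cosh t ^ 2 + k ^ 2 * sinh t ^ 2)) t := by
  have hcosh := (cosh_pos t).ne'
  have htanh := (hasDerivAt_sinh t).div (hasDerivAt_cosh t) hcosh
  rw [show sinh / cosh = tanh from funext fun t => (tanh_eq_sinh_div_cosh t).symm,
    show cosh t * cosh t - sinh t * sinh t = 1 by linear_combination cosh_sq t] at htanh
  refine ((hasDerivAt_arctan _).comp t (htanh.const_mul k)).congr_deriv ?_
  rw [tanh_eq_sinh_div_cosh]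
  field_simp

theorem hasDerivAt_sinh_div_const_add_cosh {c t : ℝ} (hc : c + cosh t ≠ 0) :
    HasDerivAt (fun t => sinh t / (c + cosh t)) ((1 + c * cosh t) / (c + cosh t) ^ 2) t := by
  refine ((hasDerivAt_sinh t).div ((hasDerivAt_cosh t).const_add c) hc).congr_deriv ?_
  congr 1
  linear_combination cosh_sq t

theorem hasDerivAt_cosh_div_const_add_cosh_two_mul {c t : ℝ} (hc : c + cosh (2 * t) ≠ 0) :
    HasDerivAt (fun t => cosh t / (c + cosh (2 * t)))
      (sinh t * (c - 3 - 2 * sinh t ^ 2) / (c + 1 + 2 * sinh t ^ 2) ^ 2) t := by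
  have hden : HasDerivAt (fun t => c + cosh (2 * t)) (sinh (2 * t) * 2) t :=
    ((hasDerivAt_cosh _).comp t (hasDerivAt_const_mul 2)).const_add c
  refine ((hasDerivAt_cosh t).div hden hc).congr_deriv ?_
  rw [cosh_two_mul, sinh_two_mul]
  congr 1
  · linear_combination (-3 * sinh t) * cosh_sq t
  · linear_combination (2 * c + 1 + cosh t ^ 2 + 3 * sinh t ^ 2) * cosh_sq t

theorem hasDerivAt_sinh_div_const_add_cosh_two_mul {c t : ℝ} (hc : c + cosh (2 * t) ≠ 0) :
    HasDerivAt (fun t => sinh t / (c + cosh (2 * t)))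
      (cosh t * (c + 1 - 2 * sinh t ^ 2) / (c + 1 + 2 * sinh t ^ 2) ^ 2) t := by
  have hden : HasDerivAt (fun t => c + cosh (2 * t)) (sinh (2 * t) * 2) t :=
    ((hasDerivAt_cosh _).comp t (hasDerivAt_const_mul 2)).const_add c
  refine ((hasDerivAt_sinh t).div hden hc).congr_deriv ?_
  rw [cosh_two_mul, sinh_two_mul]
  congr 1
  · linear_combination (cosh t) * cosh_sq t
  · linear_combination (2 * c + 1 + cosh t ^ 2 + 3 * sinh t ^ 2) * cosh_sq t

theorem sq_norm_ofReal_sub_I_mul_ofReal (a b : ℝ) :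
    ‖(a : ℂ) - Complex.I * b‖ ^ 2 = a ^ 2 + b ^ 2 := by
  rw [Complex.sq_norm, sub_eq_add_neg, ← mul_neg, ← Complex.ofReal_neg, mul_comm,
    Complex.normSq_add_mul_I, neg_sq]

section ThirringSoliton

variable {ω : ℝ}

theorem thirringSoliton_eq : thirringSoliton ω = fun x =>
    ((√2 * √(1 - ω ^ 2) * √(1 + ω) : ℝ) : ℂ) *
        ((cosh (√(1 - ω ^ 2) * x) / (ω + cosh (2 * (√(1 - ω ^ 2) * x))) : ℝ) : ℂ) -
      Complex.I * (((√2 * √(1 - ω ^ 2) * √(1 - ω) : ℝ) : ℂ) *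
        ((sinh (√(1 - ω ^ 2) * x) / (ω + cosh (2 * (√(1 - ω ^ 2) * x))) : ℝ) : ℂ)) := by
  ext x
  simp only [thirringSoliton, mul_assoc]
  push_cast
  ring

theorem hasDerivAt_thirringSoliton (hω : -1 < ω) (x : ℝ) :
    HasDerivAt (thirringSoliton ω)
      (((√2 * √(1 - ω ^ 2) * √(1 + ω) * (sinh (√(1 - ω ^ 2) * x) *
          (ω - 3 - 2 * sinh (√(1 - ω ^ 2) * x) ^ 2) /
          (ω + 1 + 2 * sinh (√(1 - ω ^ 2) * x) ^ 2) ^ 2 * √(1 - ω ^ 2)) : ℝ) : ℂ) -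
        Complex.I * ((√2 * √(1 - ω ^ 2) * √(1 - ω) * (cosh (√(1 - ω ^ 2) * x) *
          (ω + 1 - 2 * sinh (√(1 - ω ^ 2) * x) ^ 2) /
          (ω + 1 + 2 * sinh (√(1 - ω ^ 2) * x) ^ 2) ^ 2 * √(1 - ω ^ 2)) : ℝ) : ℂ)) x := by
  set μ := √(1 - ω ^ 2)
  have hD : ω + cosh (2 * (μ * x)) ≠ 0 := by linarith [one_le_cosh (2 * (μ * x))]
  have hP := (hasDerivAt_cosh_div_const_add_cosh_two_mul hD).comp x (hasDerivAt_const_mul μ)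
  have hQ := (hasDerivAt_sinh_div_const_add_cosh_two_mul hD).comp x (hasDerivAt_const_mul μ)
  rw [thirringSoliton_eq]
  exact ((hP.ofReal_comp.const_mul ((√2 * μ * √(1 + ω) : ℝ) : ℂ)).sub
    ((hQ.ofReal_comp.const_mul ((√2 * μ * √(1 - ω) : ℝ) : ℂ)).const_mul Complex.I)).congr_deriv
    (by push_cast; ring)

theorem sq_norm_deriv_thirringSoliton (hω : ω ∈ Ioo (-1 : ℝ) 1) (x : ℝ) :
    ‖deriv (thirringSoliton ω) x‖ ^ 2 =
      2 * (1 - ω ^ 2) ^ 2 * ((1 + ω) * sinh (√(1 - ω ^ 2) * x) ^ 2 *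
          (ω - 3 - 2 * sinh (√(1 - ω ^ 2) * x) ^ 2) ^ 2 +
        (1 - ω) * cosh (√(1 - ω ^ 2) * x) ^ 2 * (ω + 1 - 2 * sinh (√(1 - ω ^ 2) * x) ^ 2) ^ 2) /
        (ω + 1 + 2 * sinh (√(1 - ω ^ 2) * x) ^ 2) ^ 4 := by
  obtain ⟨hω₁, hω₂⟩ := hω
  rw [(hasDerivAt_thirringSoliton hω₁ x).deriv, sq_norm_ofReal_sub_I_mul_ofReal]
  simp only [mul_pow, div_pow]
  rw [sq_sqrt zero_le_two, sq_sqrt (by nlinarith : (0 : ℝ) ≤ 1 - ω ^ 2),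
    sq_sqrt (by linarith : (0 : ℝ) ≤ 1 + ω), sq_sqrt (by linarith : (0 : ℝ) ≤ 1 - ω)]
  ring

noncomputable def thirringPrimitive (ω x : ℝ) : ℝ :=
  2 * (1 + ω ^ 2) * arctan (√((1 - ω) / (1 + ω)) * tanh (√(1 - ω ^ 2) * x)) -
    2 * ω * √(1 - ω ^ 2) * (sinh (2 * √(1 - ω ^ 2) * x) / (ω + cosh (2 * √(1 - ω ^ 2) * x)))

theorem hasDerivAt_thirringPrimitive (hω : ω ∈ Ioo (-1 : ℝ) 1) (x : ℝ) :
    HasDerivAt (thirringPrimitive ω) (‖deriv (thirringSoliton ω) x‖ ^ 2) x := by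
  rw [sq_norm_deriv_thirringSoliton hω]
  obtain ⟨hω₁, hω₂⟩ := hω
  set μ := √(1 - ω ^ 2) with hμ
  set k := √((1 - ω) / (1 + ω)) with hk
  have hμ2 : μ ^ 2 = 1 - ω ^ 2 := sq_sqrt (by nlinarith)
  have hk2 : k ^ 2 = (1 - ω) / (1 + ω) := sq_sqrt (div_nonneg (by linarith) (by linarith))
  have h1ω : 1 + ω ≠ 0 := by linarith
  have hkμ : k * μ = 1 - ω := by
    rw [hk, hμ, ← sqrt_mul (div_nonneg (by linarith) (by linarith)),
      show (1 - ω) / (1 + ω) * (1 - ω ^ 2) = (1 - ω) ^ 2 by field_simp; ring]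
    exact sqrt_sq (by linarith)
  have hD : ω + cosh (2 * μ * x) ≠ 0 := by linarith [one_le_cosh (2 * μ * x)]
  have hA := (hasDerivAt_arctan_const_mul_tanh k _).comp x (hasDerivAt_const_mul μ)
  have hB := (hasDerivAt_sinh_div_const_add_cosh hD).comp x (hasDerivAt_const_mul (2 * μ))
  refine ((hA.const_mul (2 * (1 + ω ^ 2))).sub (hB.const_mul (2 * ω * μ))).congr_deriv ?_
  set S := sinh (μ * x)
  have hC : cosh (μ * x) ^ 2 = S ^ 2 + 1 := cosh_sq _
  have hcosh2 : cosh (2 * μ * x) = 1 + 2 * S ^ 2 := by rw [mul_assoc, cosh_two_mul, hC]; ring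
  have hDS : ω + 1 + 2 * S ^ 2 ≠ 0 := by nlinarith [sq_nonneg S]
  have harctan :
      k / (cosh (μ * x) ^ 2 + k ^ 2 * S ^ 2) * μ = (1 - ω ^ 2) / (ω + 1 + 2 * S ^ 2) := by
    rw [div_mul_eq_mul_div, hkμ, hC, hk2]
    field_simp
    ring
  have hμμ : ∀ a b : ℝ, 2 * ω * μ * (a / b * (2 * μ)) = 4 * ω * (1 - ω ^ 2) * a / b := by
    intro a b
    rw [← hμ2]
    ring
  rw [harctan, hcosh2, hC, hμμ, ← add_assoc]
  field_simp
  ring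

theorem thirringPrimitive_zero : thirringPrimitive ω 0 = 0 := by
  simp [thirringPrimitive]

theorem tendsto_thirringPrimitive_atTop (hω : ω ∈ Ioo (-1 : ℝ) 1) :
    Tendsto (thirringPrimitive ω) atTop
      (𝓝 (2 * (1 + ω ^ 2) * arctan √((1 - ω) / (1 + ω)) - 2 * ω * √(1 - ω ^ 2))) := by
  have hμ : 0 < √(1 - ω ^ 2) := sqrt_pos.mpr (by nlinarith [hω.1, hω.2])
  have htanh := tendsto_tanh_atTop.comp (tendsto_id.const_mul_atTop hμ)
  have hfrac := (tendsto_sinh_div_const_add_cosh_atTop ω).comp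
    (tendsto_id.const_mul_atTop (mul_pos two_pos hμ))
  have harctan := (continuous_arctan.tendsto _).comp (htanh.const_mul √((1 - ω) / (1 + ω)))
  have h := (harctan.const_mul (2 * (1 + ω ^ 2))).sub (hfrac.const_mul (2 * ω * √(1 - ω ^ 2)))
  simp only [mul_one] at h
  exact h

end ThirringSoliton

theorem thirringSoliton_deriv_L2 (ω : ℝ) (hω : ω ∈ Set.Ioo (-1 : ℝ) 1) :
    ∫ x : ℝ, ‖deriv (thirringSoliton ω) x‖ ^ 2
      = -4 * ω * Real.sqrt (1 - ω ^ 2)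
        + 4 * (1 + ω ^ 2) * Real.arctan (Real.sqrt ((1 - ω) / (1 + ω))) := by
  have heven (x : ℝ) :
      ‖deriv (thirringSoliton ω) (-x)‖ ^ 2 = ‖deriv (thirringSoliton ω) x‖ ^ 2 := by
    simp only [sq_norm_deriv_thirringSoliton hω, mul_neg, sinh_neg, cosh_neg, neg_sq]
  rw [integral_of_even_of_hasDerivAt_of_nonneg heven
    (fun x _ => hasDerivAt_thirringPrimitive hω x) (fun x _ => by positivity)
    (tendsto_thirringPrimitive_atTop hω), thirringPrimitive_zero]
  ring
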